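/- arXiv:1201.4806 — 2 statements merged into one kernel-verified Lean document; each statement's English description precedes it below -/
import Mathlib

section
/- Shadowing Lemma for C^1 endomorphisms: Let M be a Riemannian manifold, U ⊂ M open, f: U → M a C^1 expanding endomorphism, and Λ ⊂ U a compact invariant expanding set for f. Then there exists a neighborhood 𝒰(Λ) ⊃ Λ such that for every η > 0 there is an ε > 0 so that every ε-pseudo orbit for f contained in 𝒰(Λ) is η-shadowed by a full orbit of f. If Λ is a locally maximal invariant set, then the shadowing full orbit is contained in Λ. -/
open Metric Set
noncomputable section

open Filter Topology
open scoped NNReal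

/-! On a small ball around each point of a compact neighbourhood of `Λ`, `f` is uniformly close
to its derivative, which is invertible and expands by `λ`; hence `f` expands distances by some
`ν > 1` and maps the ball onto a neighbourhood containing the `ν`-times larger ball around the
image point. The inverse branches of `f` along a pseudo orbit are therefore `ν⁻¹`-contractions,
and pulling the pseudo orbit back along longer and longer chains of them converges to a genuine
orbit that stays close to it. A full orbit staying in an isolating block lies in `Λ`. -/

section RightInverse

variable {𝕜 E : Type*} [NontriviallyNormedField 𝕜] [NormedAddCommGroup E] [NormedSpace 𝕜 E]
  [FiniteDimensional 𝕜 E]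

theorem ContinuousLinearMap.exists_nonlinearRightInverse_of_mul_norm_le (A : E →L[𝕜] E)
    {lam : ℝ} (hlam : 0 < lam) (hA : ∀ v, lam * ‖v‖ ≤ ‖A v‖) :
    ∃ g : A.NonlinearRightInverse, (g.nnnorm : ℝ) = lam⁻¹ := by
  have hinj : Function.Injective A := by
    refine (injective_iff_map_eq_zero A).2 fun v hv => norm_le_zero_iff.1 ?_
    have := hA v
    rw [hv, norm_zero] at this
    nlinarith [norm_nonneg v]
  have hsurj : Function.Surjective A :=
    LinearMap.injective_iff_surjective (f := (A : E →ₗ[𝕜] E)).1 hinj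
  refine ⟨{ toFun := Function.surjInv hsurj
            nnnorm := lam⁻¹.toNNReal
            bound' := fun w => ?_
            right_inv' := Function.surjInv_eq hsurj }, Real.coe_toNNReal _ (by positivity)⟩
  rw [Real.coe_toNNReal _ (by positivity), inv_mul_eq_div, le_div_iff₀ hlam, mul_comm]
  simpa only [Function.surjInv_eq hsurj w] using hA (Function.surjInv hsurj w)

end RightInverse

section ApproximatesLinearOn

variable {𝕜 E : Type*} [NontriviallyNormedField 𝕜] [NormedAddCommGroup E] [NormedSpace 𝕜 E]
  {c : ℝ≥0} {lam : ℝ}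

theorem ApproximatesLinearOn.sub_mul_dist_le {F : Type*} [NormedAddCommGroup F]
    [NormedSpace 𝕜 F] {f : E → F} {A : E →L[𝕜] F} {s : Set E}
    (hf : ApproximatesLinearOn f A s c)
    (hA : ∀ v, lam * ‖v‖ ≤ ‖A v‖) {a b : E} (ha : a ∈ s) (hb : b ∈ s) :
    (lam - c) * dist a b ≤ dist (f a) (f b) := by
  have h := norm_sub_norm_le (A (a - b)) (f a - f b)
  rw [norm_sub_rev (A (a - b))] at h
  rw [dist_eq_norm, dist_eq_norm]
  linarith [hA (a - b), hf a ha b hb]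

theorem ApproximatesLinearOn.closedBall_subset_image [CompleteSpace E] [FiniteDimensional 𝕜 E]
    {f : E → E} {A : E →L[𝕜] E} {p : E} {ρ : ℝ}
    (hf : ApproximatesLinearOn f A (closedBall p ρ) c) (hlam : 0 < lam)
    (hA : ∀ v, lam * ‖v‖ ≤ ‖A v‖) (hρ : 0 ≤ ρ) :
    closedBall (f p) ((lam - c) * ρ) ⊆ f '' closedBall p ρ := by
  obtain ⟨g, hg⟩ := A.exists_nonlinearRightInverse_of_mul_norm_le hlam hA
  rw [← inv_inv lam, ← hg]
  exact hf.surjOn_closedBall_of_nonlinearRightInverse g hρ subset_rfl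

end ApproximatesLinearOn

theorem IsCompact.exists_approximatesLinearOn_closedBall {E F : Type*} [NormedAddCommGroup E]
    [NormedSpace ℝ E] [NormedAddCommGroup F] [NormedSpace ℝ F] {U : Set E} (hU : IsOpen U)
    {f : E → F} (hf : ContDiffOn ℝ 1 f U) {K : Set E} (hK : IsCompact K) (hKU : K ⊆ U)
    {c : ℝ≥0} (hc : 0 < c) :
    ∃ ρ > 0, ∀ p ∈ K,
      closedBall p ρ ⊆ U ∧ ApproximatesLinearOn f (fderiv ℝ f p) (closedBall p ρ) c := by
  obtain ⟨ρ₀, hρ₀, hρ₀U⟩ := hK.exists_cthickening_subset_open hU hKU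
  have hcont : ∀ p ∈ K, ContinuousAt (fderiv ℝ f) p := fun p hp =>
    (hf.continuousOn_fderiv_of_isOpen hU le_rfl).continuousAt (hU.mem_nhds (hKU hp))
  obtain ⟨δ, hδ, hδc⟩ := mem_uniformity_dist.1
    (hK.uniformContinuousAt_of_continuousAt _ hcont (dist_mem_uniformity (NNReal.coe_pos.2 hc)))
  refine ⟨min ρ₀ (δ / 2), by positivity, fun p hp => ?_⟩
  have hball : closedBall p (min ρ₀ (δ / 2)) ⊆ U :=
    (closedBall_subset_closedBall (min_le_left _ _)).trans
      ((closedBall_subset_cthickening hp ρ₀).trans hρ₀U)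
  refine ⟨hball, fun a ha b hb => ?_⟩
  refine (convex_closedBall p _).norm_image_sub_le_of_norm_fderiv_le'
    (fun z hz => (hf.differentiableOn one_ne_zero z (hball hz)).differentiableAt
      (hU.mem_nhds (hball hz))) (fun z hz => ?_) hb ha
  have hpz : dist p z < δ := by
    rw [dist_comm]
    linarith [mem_closedBall.1 hz, min_le_right ρ₀ (δ / 2)]
  rw [← dist_eq_norm, dist_comm]
  exact (hδc hpz hp).le

section Shadowing

variable {X : Type*} [MetricSpace X] [CompleteSpace X] {f : X → X}

theorem exists_orbit_of_contracting_branches (x : ℤ → X) {r μ : ℝ} (hr : 0 ≤ r) (hμ₀ : 0 ≤ μ)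
    (hμ : μ < 1) (g : ℤ → X → X)
    (hg_maps : ∀ k, MapsTo (g k) (closedBall (x (k + 1)) r) (closedBall (x k) r))
    (hg_lip : ∀ k, ∀ a ∈ closedBall (x (k + 1)) r, ∀ b ∈ closedBall (x (k + 1)) r,
      dist (g k a) (g k b) ≤ μ * dist a b)
    (hg_inv : ∀ k, ∀ z ∈ closedBall (x (k + 1)) r, f (g k z) = z)
    (hf : ∀ k, ContinuousOn f (closedBall (x k) r)) :
    ∃ y : ℤ → X, (∀ k, f (y k) = y (k + 1)) ∧ ∀ k, y k ∈ closedBall (x k) r := by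
  -- `Y n k = g k (g (k + 1) (⋯ g (k + n - 1) (x (k + n))))`
  set Y : ℕ → ℤ → X := fun n => (fun y k => g k (y (k + 1)))^[n] x
  have hY_succ : ∀ n k, Y (n + 1) k = g k (Y n (k + 1)) := fun n k => by
    simp only [Y, Function.iterate_succ_apply']
  have hY_mem : ∀ n k, Y n k ∈ closedBall (x k) r := by
    intro n
    induction n with
    | zero => exact fun k => mem_closedBall_self hr
    | succ n ih => exact fun k => hY_succ n k ▸ hg_maps k (ih (k + 1))
  have hY_dist : ∀ n k, dist (Y (n + 1) k) (Y n k) ≤ r * μ ^ n := by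
    intro n
    induction n with
    | zero => exact fun k => by rw [pow_zero, mul_one]; exact hY_mem 1 k
    | succ n ih =>
      intro k
      rw [hY_succ (n + 1) k, hY_succ n k]
      calc dist (g k (Y (n + 1) (k + 1))) (g k (Y n (k + 1)))
          ≤ μ * dist (Y (n + 1) (k + 1)) (Y n (k + 1)) :=
            hg_lip k _ (hY_mem _ _) _ (hY_mem _ _)
        _ ≤ μ * (r * μ ^ n) := by gcongr; exact ih (k + 1)
        _ = r * μ ^ (n + 1) := by ring
  choose y hy using fun k => cauchySeq_tendsto_of_complete
    (cauchySeq_of_le_geometric (f := fun n => Y n k) μ r hμ fun n =>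
      (dist_comm _ _).trans_le (hY_dist n k))
  have hy_mem : ∀ k, y k ∈ closedBall (x k) r := fun k =>
    isClosed_closedBall.mem_of_tendsto (hy k) (Eventually.of_forall (hY_mem · k))
  refine ⟨y, fun k => tendsto_nhds_unique ?_ (hy (k + 1)), hy_mem⟩
  have hfY : ∀ n, f (Y (n + 1) k) = Y n (k + 1) := fun n => by
    rw [hY_succ]
    exact hg_inv k _ (hY_mem n (k + 1))
  have hY_within : Tendsto (fun n => Y (n + 1) k) atTop (𝓝[closedBall (x k) r] y k) :=
    tendsto_nhdsWithin_iff.2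
      ⟨(hy k).comp (tendsto_add_atTop_nat 1), Eventually.of_forall fun n => hY_mem (n + 1) k⟩
  simpa only [Function.comp_def, hfY] using ((hf k) (y k) (hy_mem k)).tendsto.comp hY_within

theorem exists_orbit_near_pseudoOrbit_of_expanding_on_closedBall {S : Set X} {ρ ν : ℝ}
    (hν : 1 < ν) (hf_cont : ∀ p ∈ S, ContinuousOn f (closedBall p ρ))
    (hf_exp : ∀ p ∈ S, ∀ a ∈ closedBall p ρ, ∀ b ∈ closedBall p ρ,
      ν * dist a b ≤ dist (f a) (f b))
    (hf_surj : ∀ p ∈ S, closedBall (f p) (ν * ρ) ⊆ f '' closedBall p ρ)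
    {r : ℝ} (hr : 0 ≤ r) (hrρ : r ≤ ρ) (x : ℤ → X) (hxS : ∀ k, x k ∈ S)
    (hx : ∀ k, dist (f (x k)) (x (k + 1)) ≤ (ν - 1) * r) :
    ∃ y : ℤ → X, (∀ k, f (y k) = y (k + 1)) ∧ ∀ k, dist (y k) (x k) ≤ r := by
  have hν₀ : 0 < ν := by linarith
  have hnear : ∀ k, ∀ z ∈ closedBall (x (k + 1)) r, dist z (f (x k)) ≤ ν * r := fun k z hz =>
    calc dist z (f (x k)) ≤ dist z (x (k + 1)) + dist (f (x k)) (x (k + 1)) :=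
          dist_triangle_right _ _ _
      _ ≤ r + (ν - 1) * r := add_le_add hz (hx k)
      _ = ν * r := by ring
  have hbranch : ∀ k, ∀ z ∈ closedBall (x (k + 1)) r, ∃ w ∈ closedBall (x k) ρ, f w = z :=
    fun k z hz => hf_surj _ (hxS k)
      (mem_closedBall.2 ((hnear k z hz).trans (by gcongr)))
  choose! g hg_mem hg_inv using hbranch
  have hg_exp : ∀ k, ∀ a ∈ closedBall (x (k + 1)) r, ∀ b ∈ closedBall (x k) ρ,
      ν * dist (g k a) b ≤ dist a (f b) := fun k a ha b hb => by
    simpa only [hg_inv k a ha] using hf_exp _ (hxS k) _ (hg_mem k a ha) _ hb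
  obtain ⟨y, horb, hy⟩ := exists_orbit_of_contracting_branches x hr (inv_nonneg.2 hν₀.le)
    (inv_lt_one_of_one_lt₀ hν) g
    (fun k z hz => by
      have := (hg_exp k z hz _ (mem_closedBall_self (hr.trans hrρ))).trans (hnear k z hz)
      exact mem_closedBall.2 (le_of_mul_le_mul_left this hν₀))
    (fun k a ha b hb => by
      have := hg_exp k a ha _ (hg_mem k b hb)
      rw [hg_inv k b hb] at this
      rwa [inv_mul_eq_div, le_div_iff₀ hν₀, mul_comm])
    hg_inv (fun k => (hf_cont _ (hxS k)).mono (closedBall_subset_closedBall hrρ))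
  exact ⟨y, horb, fun k => mem_closedBall.1 (hy k)⟩

end Shadowing

theorem mem_iInter_preimage_iterate_of_orbit {α : Type*} {f : α → α} {y : ℤ → α}
    (hy : ∀ k, f (y k) = y (k + 1)) {s : Set α} (hs : ∀ k, y k ∈ s) (k : ℤ) :
    y k ∈ ⋂ m : ℕ, f^[m] ⁻¹' s := by
  refine mem_iInter.2 fun m => ?_
  have hiter : ∀ k, f^[m] (y k) = y (k + m) := by
    induction m with
    | zero => simp
    | succ m ih =>
      intro k
      rw [Function.iterate_succ_apply', ih, hy, Nat.cast_succ, add_assoc]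
  rw [mem_preimage, hiter]
  exact hs _

theorem IsCompact.exists_shadowing_nhds_of_expanding {E : Type*} [NormedAddCommGroup E]
    [NormedSpace ℝ E] [FiniteDimensional ℝ E] {U : Set E} (hU : IsOpen U) {f : E → E}
    (hf : ContDiffOn ℝ 1 f U) {lam : ℝ} (hlam : 1 < lam)
    (hder : ∀ x ∈ U, ∀ v : E, lam * ‖v‖ ≤ ‖fderiv ℝ f x v‖) {Λ : Set E} (hΛ : IsCompact Λ)
    {W : Set E} (hW : IsOpen W) (hΛW : Λ ⊆ W) (hWU : W ⊆ U) :
    ∃ 𝒰 : Set E, IsOpen 𝒰 ∧ Λ ⊆ 𝒰 ∧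
      ∀ η > (0 : ℝ), ∃ ε > (0 : ℝ),
        ∀ x : ℤ → E, (∀ k, x k ∈ 𝒰) → (∀ k, dist (f (x k)) (x (k + 1)) ≤ ε) →
          ∃ y : ℤ → E, (∀ k, f (y k) = y (k + 1)) ∧ ∀ k, dist (y k) (x k) ≤ η ∧ y k ∈ W := by
  obtain ⟨δ, hδ, hδW⟩ := hΛ.exists_cthickening_subset_open hW hΛW
  have hK : IsCompact (cthickening (δ / 2) Λ) := hΛ.cthickening
  have hKU : cthickening (δ / 2) Λ ⊆ U :=
    (cthickening_mono (by linarith) Λ).trans (hδW.trans hWU)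
  set c : ℝ≥0 := ((lam - 1) / 2).toNNReal
  have hc : (c : ℝ) = (lam - 1) / 2 := Real.coe_toNNReal _ (by linarith)
  set ν := lam - c
  have hν : 1 < ν := by simp only [ν, hc]; linarith
  obtain ⟨ρ, hρ, hρU⟩ := hK.exists_approximatesLinearOn_closedBall hU hf hKU
    (by rw [← NNReal.coe_pos, hc]; linarith)
  refine ⟨thickening (δ / 2) Λ, isOpen_thickening, self_subset_thickening (by positivity) Λ,
    fun η hη => ?_⟩
  set r := min η (min ρ (δ / 2))
  have hr : 0 < r := by positivity
  refine ⟨(ν - 1) * r, by nlinarith, fun x hx hps => ?_⟩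
  have hxK : ∀ k, x k ∈ cthickening (δ / 2) Λ := fun k => thickening_subset_cthickening _ _ (hx k)
  obtain ⟨y, horb, hy⟩ := exists_orbit_near_pseudoOrbit_of_expanding_on_closedBall hν
    (fun p hp => (hρU p hp).2.continuousOn)
    (fun p hp a ha b hb => (hρU p hp).2.sub_mul_dist_le (hder p (hKU hp)) ha hb)
    (fun p hp => (hρU p hp).2.closedBall_subset_image (by linarith) (hder p (hKU hp)) hρ.le)
    hr.le ((min_le_right _ _).trans (min_le_left _ _)) x hxK hps
  refine ⟨y, horb, fun k => ⟨(hy k).trans (min_le_left _ _), hδW ?_⟩⟩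
  have hyk : y k ∈ cthickening (δ / 2) (cthickening (δ / 2) Λ) :=
    mem_cthickening_of_dist_le _ _ _ _ (hxK k)
      ((hy k).trans ((min_le_right _ _).trans (min_le_right _ _)))
  simpa only [add_halves] using cthickening_cthickening_subset (by positivity) (by positivity) Λ hyk

theorem shadowing_lemma_general
    {M : Type*} [NormedAddCommGroup M] [InnerProductSpace ℝ M] [FiniteDimensional ℝ M]
    (U : Set M) (hU : IsOpen U) (f : M → M)
    (hC1 : ContDiffOn ℝ 1 f U)
    -- f is expanding on U : m{D_x f} > λ > 1 on U
    (hexp : ∃ lam > (1 : ℝ), ∀ x ∈ U, ∀ v : M, lam * ‖v‖ ≤ ‖fderiv ℝ f x v‖)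
    (Λ : Set M) (hΛU : Λ ⊆ U) (hΛcpt : IsCompact Λ) :
    ∃ 𝒰 : Set M, IsOpen 𝒰 ∧ Λ ⊆ 𝒰 ∧
      ∀ η > (0 : ℝ), ∃ ε > (0 : ℝ),
        ∀ x : ℤ → M, (∀ k : ℤ, x k ∈ 𝒰) →
          (∀ k : ℤ, dist (f (x k)) (x (k + 1)) ≤ ε) →
          ∃ y : ℤ → M, (∀ k : ℤ, f (y k) = y (k + 1)) ∧
            (∀ k : ℤ, dist (y k) (x k) ≤ η) ∧
            ((∃ V : Set M, IsOpen V ∧ Λ ⊆ V ∧ Λ = ⋂ m : ℕ, f^[m] ⁻¹' closure V) →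
              ∀ k : ℤ, y k ∈ Λ) := by
  obtain ⟨lam, hlam, hder⟩ := hexp
  obtain ⟨W, hW, hΛW, hWU, hWΛ⟩ : ∃ W, IsOpen W ∧ Λ ⊆ W ∧ W ⊆ U ∧
      ((∃ V : Set M, IsOpen V ∧ Λ ⊆ V ∧ Λ = ⋂ m : ℕ, f^[m] ⁻¹' closure V) →
        ∀ y : ℤ → M, (∀ k, f (y k) = y (k + 1)) → (∀ k, y k ∈ W) → ∀ k, y k ∈ Λ) := by
    by_cases hiso : ∃ V : Set M, IsOpen V ∧ Λ ⊆ V ∧ Λ = ⋂ m : ℕ, f^[m] ⁻¹' closure V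
    · obtain ⟨V, hV, hΛV, hΛeq⟩ := hiso
      refine ⟨U ∩ V, hU.inter hV, subset_inter hΛU hΛV, inter_subset_left, fun _ y hy hyW k => ?_⟩
      rw [hΛeq]
      exact mem_iInter_preimage_iterate_of_orbit hy (fun k => subset_closure (hyW k).2) k
    · exact ⟨U, hU, hΛU, subset_rfl, fun h => absurd h hiso⟩
  obtain ⟨𝒰, h𝒰, hΛ𝒰, hshadow⟩ :=
    hΛcpt.exists_shadowing_nhds_of_expanding hU hC1 hlam hder hW hΛW hWU
  refine ⟨𝒰, h𝒰, hΛ𝒰, fun η hη => ?_⟩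
  obtain ⟨ε, hε, hshadow⟩ := hshadow η hη
  refine ⟨ε, hε, fun x hx hps => ?_⟩
  obtain ⟨y, horb, hy⟩ := hshadow x hx hps
  exact ⟨y, horb, fun k => (hy k).1, fun hiso => hWΛ hiso y horb fun k => (hy k).2⟩

/-- **Shadowing Lemma for C¹ expanding endomorphisms.** Let M be a Riemannian manifold
(here a finite-dimensional real inner product space), U ⊆ M open, f C¹ and expanding on U,
and Λ ⊆ U a compact invariant expanding set for f.  Then there is a neighborhood 𝒰 of Λ
such that for every η > 0 there is ε > 0 so that every ε-pseudo orbit of f contained in 𝒰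
is η-shadowed by a full orbit of f; if moreover Λ is locally maximal, the shadowing full
orbit is contained in Λ. -/
theorem shadowing_lemma
    {M : Type*} [NormedAddCommGroup M] [InnerProductSpace ℝ M] [FiniteDimensional ℝ M]
    (U : Set M) (hU : IsOpen U) (f : M → M)
    (hC1 : ContDiffOn ℝ 1 f U)
    -- f is expanding on U : m{D_x f} > λ > 1 on U
    (hexp : ∃ lam > (1 : ℝ), ∀ x ∈ U, ∀ v : M, lam * ‖v‖ ≤ ‖fderiv ℝ f x v‖)
    (Λ : Set M) (hΛU : Λ ⊆ U) (hΛcpt : IsCompact Λ) (hΛinv : f '' Λ = Λ) :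
    ∃ 𝒰 : Set M, IsOpen 𝒰 ∧ Λ ⊆ 𝒰 ∧
      ∀ η > (0 : ℝ), ∃ ε > (0 : ℝ),
        ∀ x : ℤ → M, (∀ k : ℤ, x k ∈ 𝒰) →
          (∀ k : ℤ, dist (f (x k)) (x (k + 1)) ≤ ε) →
          ∃ y : ℤ → M, (∀ k : ℤ, f (y k) = y (k + 1)) ∧
            (∀ k : ℤ, dist (y k) (x k) ≤ η) ∧
            ((∃ V : Set M, IsOpen V ∧ Λ ⊆ V ∧ Λ = ⋂ m : ℕ, f^[m] ⁻¹' closure V) →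
              ∀ k : ℤ, y k ∈ Λ) :=
  shadowing_lemma_general U hU f hC1 hexp Λ hΛU hΛcpt
end
end

section
/- Lemma: Let f ∈ E^r(T^n) satisfy the Main Theorem hypotheses. Then there exist a C^1 neighborhood 𝒱_2(f) of f and R > 0 such that for every g ∈ 𝒱_2(f): if x ∈ T^n satisfies g^n(x) ∉ U_0 for every n ≥ 0, then there is ε_0 > 0 such that for every 0 < ε < ε_0 there exists N = N(ε) ∈ N with B_R(g^N(x)) ⊂ g^N(B_ε(x)), where B_r(y) denotes the open ball of radius r centered at y. -/
open Metric Set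
noncomputable section

/-- Euclidean covering space ℝⁿ. -/
abbrev Rn (n : ℕ) : Type := EuclideanSpace ℝ (Fin n)

/-- The n-dimensional torus Tⁿ = ℝⁿ/ℤⁿ. -/
abbrev Torus (n : ℕ) : Type := Fin n → AddCircle (1 : ℝ)

/-- Covering projection ℝⁿ → Tⁿ. -/
def proj {n : ℕ} (x : Rn n) : Torus n := fun i => (x i : AddCircle (1 : ℝ))

/-- `F` is a lift of `f` to the universal cover. -/
def IsLift {n : ℕ} (f : Torus n → Torus n) (F : Rn n → Rn n) : Prop :=
  ∀ x, proj (F x) = f (proj x)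

/-- Volume expanding: |det Df| > σ > 1 everywhere (via a lift). -/
def VolumeExpanding {n : ℕ} (F : Rn n → Rn n) : Prop :=
  ∃ σ > (1 : ℝ), ∀ x : Rn n, σ < |LinearMap.det (fderiv ℝ F x : Rn n →ₗ[ℝ] Rn n)|

/-- Expanding on a subset S of the torus: the minimum norm of the derivative is > λ > 1. -/
def ExpandingOn {n : ℕ} (F : Rn n → Rn n) (S : Set (Torus n)) : Prop :=
  ∃ lam > (1 : ℝ), ∀ x : Rn n, proj x ∈ S → ∀ v : Rn n, lam * ‖v‖ ≤ ‖fderiv ℝ F x v‖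


/-- Fundamental domain [0,1)ⁿ of the covering. -/
def FD (n : ℕ) : Set (Rn n) := {x | ∀ i, x i ∈ Set.Ico (0 : ℝ) 1}

/-- Lift of a subset of the torus restricted to the fundamental domain. -/
def liftFD {n : ℕ} (U : Set (Torus n)) : Set (Rn n) := proj ⁻¹' U ∩ FD n

/-- Diameter of an open subset of the torus, measured on the lift to a
fundamental domain. -/
def diamT {n : ℕ} (U : Set (Torus n)) : ℝ := Metric.diam (liftFD U)

/-- sup-distance max_i |x_i - y_i| on ℝⁿ. -/
def supDist {n : ℕ} (x y : Rn n) : ℝ := ⨆ i, |x i - y i|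

/-- dist(A,B) = inf over pairs of the sup-distance. -/
def distSets {n : ℕ} (A B : Set (Rn n)) : ℝ :=
  sInf {d | ∃ x ∈ A, ∃ y ∈ B, d = supDist x y}

/-- The integer vector k ∈ ℤⁿ viewed in ℝⁿ. -/
def intVec {n : ℕ} (k : Fin n → ℤ) : Rn n := WithLp.toLp 2 (fun i => (k i : ℝ))

/-- internal diameter of U^c : min over nonzero k ∈ ℤⁿ of dist(Ũ, Ũ + k). -/
def diamInt {n : ℕ} (U : Set (Torus n)) : ℝ :=
  sInf {d | ∃ k : Fin n → ℤ, k ≠ 0 ∧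
    d = distSets (liftFD U) ((fun x => x + intVec k) '' liftFD U)}

/-- An arc in the torus, given by a (lifted) parametrization on [0,1];
the projection to the torus is required to be injective. -/
structure TorusArc (n : ℕ) where
  c : ℝ → Rn n
  contOn : ContinuousOn c (Set.Icc 0 1)
  injOn : Set.InjOn (proj ∘ c) (Set.Icc 0 1)

/-- The set of points of the arc in the torus. -/
def TorusArc.carrier {n : ℕ} (γ : TorusArc n) : Set (Torus n) :=
  (proj ∘ γ.c) '' Set.Icc 0 1

/-- The diameter of an arc, measured on its lift. -/
def TorusArc.diam {n : ℕ} (γ : TorusArc n) : ℝ := Metric.diam (γ.c '' Set.Icc 0 1)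

/-- All pre-orbits of f are dense: for every x, {w : f^k(w) = x, k ∈ ℕ} is dense. -/
def PreorbitDense {n : ℕ} (f : Torus n → Torus n) : Prop :=
  ∀ x : Torus n, Dense {w : Torus n | ∃ k : ℕ, f^[k] w = x}

/-- f is topologically transitive: some forward orbit is dense. -/
def TopTransitive {n : ℕ} (f : Torus n → Torus n) : Prop :=
  ∃ x : Torus n, Dense (Set.range fun k : ℕ => f^[k] x)

/-- ε-closeness of (lifts of) two maps in the C^r topology. -/
def CrClose {n : ℕ} (r : ℕ) (F G : Rn n → Rn n) (ε : ℝ) : Prop :=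
  ∀ i ≤ r, ∀ x : Rn n, ‖iteratedFDeriv ℝ i F x - iteratedFDeriv ℝ i G x‖ < ε

/-- Λ is a (compact, invariant) expanding set for f (with lift F). -/
def ExpandingSet {n : ℕ} (f : Torus n → Torus n) (F : Rn n → Rn n)
    (Λ : Set (Torus n)) : Prop :=
  IsCompact Λ ∧ f '' Λ = Λ ∧ ExpandingOn F Λ

/-- Λ is locally maximal (isolated) for f: it has an isolating block. -/
def LocallyMaximal {n : ℕ} (f : Torus n → Torus n) (Λ : Set (Torus n)) : Prop :=
  ∃ V : Set (Torus n), IsOpen V ∧ Λ ⊆ V ∧ Λ = ⋂ k : ℕ, f^[k] ⁻¹' closure V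

/-- V is an isolating block for Λ. -/
def IsolatingBlock {n : ℕ} (f : Torus n → Torus n) (Λ V : Set (Torus n)) : Prop :=
  IsOpen V ∧ Λ ⊆ V ∧ Λ = ⋂ k : ℕ, f^[k] ⁻¹' closure V

/-- The hypotheses of the Main Theorem on f (with lift F). -/
structure MainHyp {n : ℕ} (f : Torus n → Torus n) (F : Rn n → Rn n)
    (U0 U1 : Set (Torus n)) (δ0 : ℝ) : Prop where
  isLift : IsLift f F
  volExp : VolumeExpanding F
  preDense : PreorbitDense f
  openU0 : IsOpen U0
  diamU0 : diamT U0 < 1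
  expandingOff : ExpandingOn F U0ᶜ
  δ0pos : 0 < δ0
  δ0lt : δ0 < diamInt U0
  openU1 : IsOpen U1
  nbhdU1 : closure U0 ⊆ U1
  arcHyp : ∀ γ : TorusArc n, γ.carrier ⊆ U0ᶜ → δ0 < γ.diam →
      ∃ y ∈ γ.carrier, ∀ k : ℕ, 1 ≤ k → f^[k] y ∈ U1ᶜ
  preim : ∀ z ∈ U1ᶜ, ∃ z' ∈ U1ᶜ, f z' = z

/-- The derivative cocycle of f iterated i times, given the point-wise derivative D. -/
def Dpow {n : ℕ} (f : Torus n → Torus n) (D : Torus n → (Rn n →L[ℝ] Rn n)) :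
    ℕ → Torus n → (Rn n →L[ℝ] Rn n)
  | 0, _ => ContinuousLinearMap.id ℝ (Rn n)
  | (i + 1), x => (Dpow f D i (f x)).comp (D x)


/-- The disc orthogonal to the (differentiable) curve c at parameter t, radius r, lifted. -/
def orthoDiscLift {n : ℕ} (c : ℝ → Rn n) (t r : ℝ) : Set (Rn n) :=
  {y : Rn n | inner ℝ (y - c t) (deriv c t) = (0 : ℝ) ∧ ‖y - c t‖ ≤ r}

/-- The cylinder C(γ,r) centered at the (differentiable) arc parametrized by c with radius r. -/
def cylinder {n : ℕ} (c : ℝ → Rn n) (r : ℝ) : Set (Torus n) :=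
  proj '' ⋃ t ∈ Set.Icc (0 : ℝ) 1, orthoDiscLift c t r

/-- Bottom side of the cylinder (orthogonal disc at the initial extremal point). -/
def botDisc {n : ℕ} (c : ℝ → Rn n) (r : ℝ) : Set (Torus n) := proj '' orthoDiscLift c 0 r

/-- Top side of the cylinder (orthogonal disc at the final extremal point). -/
def topDisc {n : ℕ} (c : ℝ → Rn n) (r : ℝ) : Set (Torus n) := proj '' orthoDiscLift c 1 r

/-- A nice cylinder: simply connected, and bottom/top sides contained in the boundary. -/
def NiceCylinder {n : ℕ} (c : ℝ → Rn n) (r : ℝ) : Prop :=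
  SimplyConnectedSpace ↥(cylinder c r) ∧
    botDisc c r ⊆ frontier (cylinder c r) ∧ topDisc c r ⊆ frontier (cylinder c r)

/-- Lateral border of the cylinder: boundary minus top and bottom sides. -/
def lateralBorder {n : ℕ} (c : ℝ → Rn n) (r : ℝ) : Set (Torus n) :=
  frontier (cylinder c r) \ (botDisc c r ∪ topDisc c r)

/-- Every arc inside the cylinder going from the bottom side to the top side
has diameter at least δ. -/
def BottomToTopLarge {n : ℕ} (c : ℝ → Rn n) (r δ : ℝ) : Prop :=
  ∀ γ : TorusArc n, γ.carrier ⊆ cylinder c r →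
    proj (γ.c 0) ∈ botDisc c r → proj (γ.c 1) ∈ topDisc c r → δ ≤ γ.diam

/-- Λ separates horizontally the nice cylinder C(γ,r): some connected component Λ_c of Λ
meets the cylinder across the lateral border and disconnects the cylinder. -/
def SeparatesHorizontally {n : ℕ} (Λ : Set (Torus n)) (c : ℝ → Rn n) (r : ℝ) : Prop :=
  ∃ x ∈ Λ,
    (connectedComponentIn Λ x ∩ cylinder c r).Nonempty ∧
    (connectedComponentIn Λ x ∩ lateralBorder c r).Nonempty ∧
    ∃ p ∈ cylinder c r \ connectedComponentIn Λ x,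
      ∃ q ∈ cylinder c r \ connectedComponentIn Λ x,
        q ∉ connectedComponentIn (cylinder c r \ connectedComponentIn Λ x) p


/-!
Off `U₀` the derivative of `f` expands vectors by a factor `λ > 1`, and since the derivative of
a lift is `ℤⁿ`-periodic it is uniformly continuous. Hence, if `g` is `C¹`-close to `f` and `c`
lies over `U₀ᶜ`, a quantitative inverse function theorem shows that the image under `g` of the
ball of radius `s ≤ ρ` about `c` contains the ball of radius `μ s` about `g c`, for constants
`μ > 1` and `ρ > 0` independent of `g` and `c`. Along an orbit that never enters `U₀` these balls
grow geometrically until they reach radius `ρ`; `R` is `ρ` up to the factor `√n` comparing the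
Euclidean norm on `ℝⁿ` with the sup metric on `Tⁿ`.
-/

open Function

lemma AddCircle.exists_coe_eq_abs_eq_norm {p : ℝ} (u : AddCircle p) :
    ∃ t : ℝ, (t : AddCircle p) = u ∧ |t| = ‖u‖ := by
  obtain ⟨a, rfl⟩ := QuotientAddGroup.mk_surjective u
  refine ⟨a - round (p⁻¹ * a) * p, ?_, by rw [AddCircle.norm_eq]⟩
  rw [AddCircle.coe_sub, ← zsmul_eq_mul, AddCircle.coe_zsmul, AddCircle.coe_period, smul_zero,
    sub_zero]

lemma EuclideanSpace.norm_le_sqrt_mul_of_forall_norm_le {n : ℕ} {v : EuclideanSpace ℝ (Fin n)}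
    {C : ℝ} (hC : 0 ≤ C) (h : ∀ i, ‖v i‖ ≤ C) : ‖v‖ ≤ √n * C :=
  calc ‖v‖ = √(∑ i, ‖v i‖ ^ 2) := EuclideanSpace.norm_eq v
    _ ≤ √(∑ _i : Fin n, C ^ 2) := by gcongr with i; exact h i
    _ = √n * C := by simp [Real.sqrt_mul, hC]

section Torus

variable {n : ℕ}

lemma proj_surjective : Surjective (proj : Rn n → Torus n) := fun p => by
  choose x hx using fun i => QuotientAddGroup.mk_surjective (p i)
  exact ⟨WithLp.toLp 2 x, funext hx⟩

lemma proj_add_intVec (x : Rn n) (k : Fin n → ℤ) : proj (x + intVec k) = proj x := by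
  funext i
  simp [proj, intVec]

lemma dist_proj_le (x y : Rn n) : dist (proj x) (proj y) ≤ dist x y := by
  refine (dist_pi_le_iff dist_nonneg).2 fun i => ?_
  calc dist (proj x i) (proj y i) = ‖((x i - y i : ℝ) : AddCircle (1 : ℝ))‖ := by
        rw [dist_eq_norm, AddCircle.coe_sub]; rfl
    _ ≤ ‖x i - y i‖ := QuotientAddGroup.norm_mk_le_norm
    _ ≤ dist x y := by rw [← dist_eq_norm]; exact PiLp.dist_apply_le x y i

lemma exists_proj_eq_norm_sub_le (p : Torus n) (Y : Rn n) :
    ∃ P, proj P = p ∧ ‖P - Y‖ ≤ √n * dist p (proj Y) := by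
  choose t ht hnorm using fun i => AddCircle.exists_coe_eq_abs_eq_norm (p i - proj Y i)
  refine ⟨Y + WithLp.toLp 2 t, funext fun i => ?_, ?_⟩
  · simp [proj, ht]
  · refine EuclideanSpace.norm_le_sqrt_mul_of_forall_norm_le dist_nonneg fun i => ?_
    simpa [hnorm, ← dist_eq_norm] using dist_le_pi_dist p (proj Y) i

lemma exists_norm_add_intVec_le (x : Rn n) : ∃ k, ‖x + intVec k‖ ≤ √n := by
  refine ⟨fun i => -⌊x i⌋, mul_one √(n : ℝ) ▸
    EuclideanSpace.norm_le_sqrt_mul_of_forall_norm_le zero_le_one fun i => ?_⟩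
  simp [intVec, ← sub_eq_add_neg, abs_of_nonneg (Int.fract_nonneg (x i)),
    (Int.fract_lt_one (x i)).le]

lemma uniformContinuous_of_intVec_periodic {β : Type*} [PseudoMetricSpace β] {φ : Rn n → β}
    (hφ : Continuous φ) (hper : ∀ k x, φ (x + intVec k) = φ x) : UniformContinuous φ := by
  have hK := (isCompact_closedBall (0 : Rn n) (√n + 1)).uniformContinuousOn_of_continuous
    hφ.continuousOn
  rw [Metric.uniformContinuousOn_iff] at hK
  refine Metric.uniformContinuous_iff.2 fun ε hε => ?_
  obtain ⟨δ, hδ, hφδ⟩ := hK ε hε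
  refine ⟨min δ 1, by positivity, ?_⟩
  intro x y hxy
  obtain ⟨k, hk⟩ := exists_norm_add_intVec_le x
  have hdist : dist (x + intVec k) (y + intVec k) = dist x y := dist_add_right _ _ _
  have hy : ‖y + intVec k‖ ≤ √n + 1 := by
    have := norm_le_norm_add_norm_sub' (y + intVec k) (x + intVec k)
    rw [← dist_eq_norm', hdist] at this
    linarith [min_le_right δ 1]
  rw [← hper k x, ← hper k y]
  exact hφδ _ (mem_closedBall_zero_iff.2 (by linarith)) _ (mem_closedBall_zero_iff.2 hy)
    (hdist.trans_lt (hxy.trans_le (min_le_left _ _)))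

lemma IsLift.iterate {g : Torus n → Torus n} {G : Rn n → Rn n} (h : IsLift g G) (m : ℕ) :
    IsLift g^[m] G^[m] := by
  induction m with
  | zero => exact fun _ => rfl
  | succ m ih => exact fun x => by rw [iterate_succ_apply', iterate_succ_apply', h, ih]

lemma IsLift.fderiv_add_intVec {f : Torus n → Torus n} {F : Rn n → Rn n} (h : IsLift f F)
    (hF : Continuous F) (k : Fin n → ℤ) (x : Rn n) :
    fderiv ℝ F (x + intVec k) = fderiv ℝ F x := by
  have hconst : ∀ y, F (y + intVec k) - F y = F (0 + intVec k) - F 0 := by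
    intro y
    ext i
    have hmem : ∀ z, (F (z + intVec k) - F z) i ∈ (AddSubgroup.zmultiples (1 : ℝ) : Set ℝ) := by
      intro z
      have hz : proj (F (z + intVec k)) = proj (F z) := by rw [h, h, proj_add_intVec]
      rw [SetLike.mem_coe, ← QuotientAddGroup.eq_zero_iff]
      simpa [proj, sub_eq_zero] using congrFun hz i
    exact isPreconnected_univ.constant_of_mapsTo
      ⟨inferInstanceAs (DiscreteTopology (AddSubgroup.zmultiples (1 : ℝ)))⟩
      (by fun_prop) (fun z _ => hmem z) trivial trivial
  have hshift : (fun y => F (y + intVec k)) = fun y => F y + (F (0 + intVec k) - F 0) :=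
    funext fun y => by rw [← hconst y]; abel
  calc fderiv ℝ F (x + intVec k) = fderiv ℝ (fun y => F (y + intVec k)) x :=
        (fderiv_comp_add_right (intVec k)).symm
    _ = fderiv ℝ F x := by rw [hshift, fderiv_add_const]

lemma IsLift.uniformContinuous_fderiv {f : Torus n → Torus n} {F : Rn n → Rn n}
    (h : IsLift f F) (hF : ContDiff ℝ 1 F) : UniformContinuous (fderiv ℝ F) :=
  uniformContinuous_of_intVec_periodic (hF.continuous_fderiv one_ne_zero)
    fun k x => h.fderiv_add_intVec hF.continuous k x

lemma CrClose.norm_fderiv_sub_lt {r : ℕ} {F G : Rn n → Rn n} {ε : ℝ} (h : CrClose r F G ε)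
    (hr : 1 ≤ r) (x : Rn n) : ‖fderiv ℝ F x - fderiv ℝ G x‖ < ε := by
  have : iteratedFDeriv ℝ 1 F x - iteratedFDeriv ℝ 1 G x =
      (continuousMultilinearCurryFin1 ℝ (Rn n) (Rn n)).symm (fderiv ℝ F x - fderiv ℝ G x) := by
    ext m; simp
  have hclose := h 1 hr x
  rwa [this, LinearIsometryEquiv.norm_map] at hclose

end Torus

section Expansion

variable {E : Type*} [NormedAddCommGroup E] [NormedSpace ℝ E]

lemma approximatesLinearOn_of_norm_fderiv_sub_le {F : Type*} [NormedAddCommGroup F]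
    [NormedSpace ℝ F] {G : E → F} {A : E →L[ℝ] F} {s : Set E} {κ : NNReal} (hs : Convex ℝ s)
    (hG : ∀ x ∈ s, DifferentiableAt ℝ G x) (h : ∀ x ∈ s, ‖fderiv ℝ G x - A‖ ≤ κ) :
    ApproximatesLinearOn G A s κ := fun _ hx _ hy =>
  hs.norm_image_sub_le_of_norm_fderiv_le' hG h hy hx

variable [FiniteDimensional ℝ E]

lemma closedBall_subset_image_of_approximatesLinearOn {G : E → E} {A : E →L[ℝ] E} {c : E}
    {s m : ℝ} {κ : NNReal} (hs : 0 ≤ s) (hm : 0 < m) (hA : ∀ v, m * ‖v‖ ≤ ‖A v‖)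
    (hG : ApproximatesLinearOn G A (closedBall c s) κ) :
    closedBall (G c) ((m - κ) * s) ⊆ G '' closedBall c s := by
  have hinj : Injective A := fun u v huv => by
    have := hA (u - v)
    rw [map_sub, huv, sub_self, norm_zero] at this
    exact sub_eq_zero.1 (norm_le_zero_iff.1 (nonpos_of_mul_nonpos_right this hm))
  let e : E ≃ₗ[ℝ] E := LinearEquiv.ofInjectiveEndo A.toLinearMap hinj
  let Ainv : A.NonlinearRightInverse :=
    { toFun := e.symm
      nnnorm := m⁻¹.toNNReal
      bound' := fun y => by
        rw [Real.coe_toNNReal _ (inv_nonneg.2 hm.le), inv_mul_eq_div, le_div_iff₀ hm, mul_comm]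
        simpa [show A (e.symm y) = y from e.apply_symm_apply y] using hA (e.symm y)
      right_inv' := e.apply_symm_apply }
  have := FiniteDimensional.complete ℝ E
  have hsurj := hG.surjOn_closedBall_of_nonlinearRightInverse Ainv hs subset_rfl
  rwa [show (Ainv.nnnorm : ℝ)⁻¹ = m by simp [Ainv, hm.le]] at hsurj

/-- Of the loss `4 * η`, one `η` is the perturbation of `Df c` and three bound the oscillation
of `Dg` on the ball. -/
lemma closedBall_subset_image_of_fderiv_near_expanding {F G : E → E} {c : E} {lam η s : ℝ}
    (hG : Differentiable ℝ G) (hs : 0 ≤ s) (hη : η < lam)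
    (hexp : ∀ v, lam * ‖v‖ ≤ ‖fderiv ℝ F c v‖)
    (hF : ∀ w ∈ closedBall c s, ‖fderiv ℝ F w - fderiv ℝ F c‖ ≤ η)
    (hGF : ∀ w, ‖fderiv ℝ G w - fderiv ℝ F w‖ ≤ η) :
    closedBall (G c) ((lam - 4 * η) * s) ⊆ G '' closedBall c s := by
  have hη0 : 0 ≤ η := (norm_nonneg _).trans (hGF c)
  have hexpG : ∀ v, (lam - η) * ‖v‖ ≤ ‖fderiv ℝ G c v‖ := fun v => by
    have hdiff := ((fderiv ℝ G c - fderiv ℝ F c).le_opNorm v).trans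
      (mul_le_mul_of_nonneg_right (hGF c) (norm_nonneg v))
    have := norm_le_norm_add_norm_sub' (fderiv ℝ F c v) (fderiv ℝ G c v)
    rw [norm_sub_rev] at this
    rw [sub_apply] at hdiff
    linarith [hexp v]
  have hosc : ∀ w ∈ closedBall c s, ‖fderiv ℝ G w - fderiv ℝ G c‖ ≤ (3 * η).toNNReal := by
    intro w hw
    rw [Real.coe_toNNReal _ (by positivity)]
    have h₁ := norm_sub_le_norm_sub_add_norm_sub (fderiv ℝ G w) (fderiv ℝ F w) (fderiv ℝ G c)
    have h₂ := norm_sub_le_norm_sub_add_norm_sub (fderiv ℝ F w) (fderiv ℝ F c) (fderiv ℝ G c)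
    rw [norm_sub_rev (fderiv ℝ F c)] at h₂
    linarith [hGF w, hF w hw, hGF c]
  have := closedBall_subset_image_of_approximatesLinearOn hs (by linarith) hexpG
    (approximatesLinearOn_of_norm_fderiv_sub_le (convex_closedBall c s) (fun w _ => hG w) hosc)
  rwa [Real.coe_toNNReal _ (by positivity), sub_sub, ← one_add_mul,
    show (1 : ℝ) + 3 = 4 by norm_num] at this

end Expansion

lemma exists_closedBall_iterate_subset_image {α : Type*} [PseudoMetricSpace α] {G : α → α}
    {x : α} {μ ρ ε : ℝ} (hμ : 1 < μ) (hρ : 0 ≤ ρ) (hε : 0 < ε)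
    (hstep : ∀ m s, 0 ≤ s → s ≤ ρ →
      closedBall (G (G^[m] x)) (μ * s) ⊆ G '' closedBall (G^[m] x) s) :
    ∃ N, closedBall (G^[N] x) ρ ⊆ G^[N] '' closedBall x ε := by
  have key : ∀ m, closedBall (G^[m] x) (min (μ ^ m * ε) ρ) ⊆ G^[m] '' closedBall x ε := by
    intro m
    induction m with
    | zero => simpa using closedBall_subset_closedBall (min_le_left ε ρ)
    | succ m ih =>
      have hrad : min (μ ^ (m + 1) * ε) ρ ≤ μ * min (μ ^ m * ε) ρ := by
        rw [mul_min_of_nonneg _ _ (by linarith), pow_succ', mul_assoc]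
        exact min_le_min_left _ (le_mul_of_one_le_left hρ hμ.le)
      calc closedBall (G^[m + 1] x) (min (μ ^ (m + 1) * ε) ρ)
          ⊆ closedBall (G (G^[m] x)) (μ * min (μ ^ m * ε) ρ) := by
            rw [iterate_succ_apply']; exact closedBall_subset_closedBall hrad
        _ ⊆ G '' closedBall (G^[m] x) (min (μ ^ m * ε) ρ) :=
            hstep m _ (le_min (by positivity) hρ) (min_le_right _ _)
        _ ⊆ G^[m + 1] '' closedBall x ε := by
            rw [iterate_succ', image_comp]; exact image_mono ih
  obtain ⟨N, hN⟩ := pow_unbounded_of_one_lt (ρ / ε) hμ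
  rw [div_lt_iff₀ hε] at hN
  exact ⟨N, by simpa [min_eq_right hN.le] using key N⟩

/-- **Lemma.** Under the Main Theorem hypotheses there are a C¹ neighborhood 𝒱₂(f) and
R > 0 such that for every g ∈ 𝒱₂(f) and every x whose forward g-orbit never meets U₀,
there is ε₀ > 0 so that for every 0 < ε < ε₀ there is N ∈ ℕ with
B_R(g^N(x)) ⊆ g^N(B_ε(x)). -/
theorem large_radius_lemma {n : ℕ} (r : ℕ) (hr : 1 ≤ r)
    (f : Torus n → Torus n) (F : Rn n → Rn n) (hsmooth : ContDiff ℝ r F)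
    (U0 U1 : Set (Torus n)) (δ0 : ℝ)
    (hyp : MainHyp f F U0 U1 δ0) :
    ∃ ε' > (0 : ℝ), ∃ R > (0 : ℝ), ∀ (g : Torus n → Torus n) (G : Rn n → Rn n),
      IsLift g G → ContDiff ℝ 1 G → CrClose 1 F G ε' →
      ∀ x : Torus n, (∀ m : ℕ, g^[m] x ∉ U0) →
        ∃ ε0 > (0 : ℝ), ∀ ε : ℝ, 0 < ε → ε < ε0 →
          ∃ N : ℕ, Metric.ball (g^[N] x) R ⊆ g^[N] '' Metric.ball x ε := by
  obtain ⟨lam, hlam, hexp⟩ := hyp.expandingOff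
  obtain ⟨η, hη, hηlam⟩ : ∃ η, 0 < η ∧ 4 * η < lam - 1 :=
    ⟨(lam - 1) / 8, by linarith, by linarith⟩
  obtain ⟨δ, hδ, hFosc⟩ := Metric.uniformContinuous_iff.1
    (hyp.isLift.uniformContinuous_fderiv (hsmooth.of_le (by exact_mod_cast hr))) η hη
  obtain ⟨ρ, hρ, hρδ⟩ : ∃ ρ, 0 < ρ ∧ ρ < δ := ⟨δ / 2, half_pos hδ, half_lt_self hδ⟩
  refine ⟨η, hη, ρ / (√n + 1), by positivity, fun g G hgG hG hGF x hx => ?_⟩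
  refine ⟨1, one_pos, fun ε hε _ => ?_⟩
  obtain ⟨X, rfl⟩ := proj_surjective x
  have hstep : ∀ m s, 0 ≤ s → s ≤ ρ → closedBall (G (G^[m] X)) ((lam - 4 * η) * s) ⊆
      G '' closedBall (G^[m] X) s := fun m s hs hsρ =>
    closedBall_subset_image_of_fderiv_near_expanding (hG.differentiable one_ne_zero) hs
      (by linarith) (hexp _ (by rw [hgG.iterate m X]; exact hx m))
      (fun w hw => (dist_eq_norm _ _).symm.trans_le
        (hFosc ((mem_closedBall.1 hw).trans_lt (by linarith))).le)
      (fun w => by rw [norm_sub_rev]; exact (hGF.norm_fderiv_sub_lt le_rfl w).le)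
  obtain ⟨N, hN⟩ := exists_closedBall_iterate_subset_image (by linarith) hρ.le (half_pos hε) hstep
  refine ⟨N, fun p hp => ?_⟩
  obtain ⟨P, rfl, hP⟩ := exists_proj_eq_norm_sub_le p (G^[N] X)
  rw [mem_ball, ← hgG.iterate N X] at hp
  have hPρ : ‖P - G^[N] X‖ ≤ ρ :=
    calc ‖P - G^[N] X‖ ≤ √n * (ρ / (√n + 1)) := hP.trans (by gcongr)
      _ ≤ ρ := by rw [mul_div_assoc', div_le_iff₀ (by positivity)]; nlinarith
  obtain ⟨Q, hQ, rfl⟩ := hN (mem_closedBall_iff_norm.2 hPρ)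
  exact ⟨proj Q, (dist_proj_le Q X).trans_lt ((mem_closedBall.1 hQ).trans_lt (half_lt_self hε)),
    (hgG.iterate N Q).symm⟩
end
end
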